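/- For every loopless matroid M on a finite ground set, the coefficient of t in the Kazhdan–Lusztig polynomial P_M(t) is non-negative. -/

import Mathlib

open scoped Classical

/-- A matroid on a finite ground set, presented by its rank function
(normalized, monotone, submodular, with unit increase). -/
structure FinMatroid where
  E : Type
  fintypeE : Fintype E
  deceqE : DecidableEq E
  rk : Finset E → ℕ
  rk_empty : rk ∅ = 0
  rk_mono : ∀ ⦃S T : Finset E⦄, S ⊆ T → rk S ≤ rk T
  rk_submod : ∀ S T : Finset E, rk (S ∪ T) + rk (S ∩ T) ≤ rk S + rk T
  rk_insert_le : ∀ (S : Finset E) (x : E), rk (insert x S) ≤ rk S + 1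

attribute [instance] FinMatroid.fintypeE FinMatroid.deceqE

namespace FinMatroid

/-- The rank of the matroid: the rank of the full ground set. -/
noncomputable def rank (M : FinMatroid) : ℕ := M.rk Finset.univ

/-- A flat: a set such that adding any new element increases the rank. -/
def IsFlat (M : FinMatroid) (F : Finset M.E) : Prop :=
  ∀ x ∉ F, M.rk (insert x F) ≠ M.rk F

/-- The (finite) collection of flats of `M`. -/
noncomputable def flats (M : FinMatroid) : Finset (Finset M.E) :=
  Finset.univ.filter M.IsFlat

/-- A matroid is loopless if every singleton has rank 1. -/
def Loopless (M : FinMatroid) : Prop := ∀ x : M.E, M.rk {x} = 1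

/-- The Möbius function of the lattice of flats of `M` (extended by the usual
recursion; `mu A B = 0` unless `A ⊆ B`). -/
noncomputable def mu (M : FinMatroid) (A B : Finset M.E) : ℤ :=
  if A = B then 1
  else -∑ G ∈ (M.flats.filter (fun G => A ⊆ G ∧ G ⊂ B)).attach,
        M.mu A G.1
termination_by B.card
decreasing_by
  exact Finset.card_lt_card (Finset.mem_filter.mp G.2).2.2

/-- The characteristic polynomial `χ_M(t) = ∑_{F flat} μ(∅,F) t^(rk M - rk F)`. -/
noncomputable def charPoly (M : FinMatroid) : Polynomial ℤ :=
  ∑ F ∈ M.flats, Polynomial.C (M.mu ∅ F) * Polynomial.X ^ (M.rank - M.rk F)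

/-- The localization `M_F`: the restriction of `M` to the set `F`. -/
noncomputable def localization (M : FinMatroid) (F : Finset M.E) : FinMatroid where
  E := {x : M.E // x ∈ F}
  fintypeE := inferInstance
  deceqE := inferInstance
  rk S := M.rk (S.map (Function.Embedding.subtype _))
  rk_empty := by simpa using M.rk_empty
  rk_mono := fun S T h => M.rk_mono (Finset.map_subset_map.mpr h)
  rk_submod := fun S T => by
    try dsimp only
    rw [Finset.map_union, Finset.map_inter]
    exact M.rk_submod _ _
  rk_insert_le := fun S x => by
    try dsimp only
    rw [Finset.map_insert]
    exact M.rk_insert_le _ _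

/-- The restriction `M^F` (the contraction of `M` by the flat `F`), a matroid on
the complement of `F`. -/
noncomputable def restrictionAt (M : FinMatroid) (F : Finset M.E) : FinMatroid where
  E := {x : M.E // x ∉ F}
  fintypeE := inferInstance
  deceqE := inferInstance
  rk S := M.rk (S.map (Function.Embedding.subtype _) ∪ F) - M.rk F
  rk_empty := by simp
  rk_mono := fun S T h =>
    Nat.sub_le_sub_right
      (M.rk_mono (Finset.union_subset_union_left (Finset.map_subset_map.mpr h))) _
  rk_submod := fun S T => by
    try dsimp only
    set e := Function.Embedding.subtype (fun x : M.E => x ∉ F) with he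
    have h1 : (S ∪ T).map e ∪ F = (S.map e ∪ F) ∪ (T.map e ∪ F) := by
      rw [Finset.map_union, Finset.union_union_distrib_right]
    have h2 : (S ∩ T).map e ∪ F = (S.map e ∪ F) ∩ (T.map e ∪ F) := by
      rw [Finset.map_inter, Finset.inter_union_distrib_right]
    have h3 := M.rk_submod (S.map e ∪ F) (T.map e ∪ F)
    have h4 : M.rk F ≤ M.rk (S.map e ∪ F) := M.rk_mono Finset.subset_union_right
    have h5 : M.rk F ≤ M.rk (T.map e ∪ F) := M.rk_mono Finset.subset_union_right
    have h6 : M.rk F ≤ M.rk ((S ∩ T).map e ∪ F) := M.rk_mono Finset.subset_union_right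
    have h7 : M.rk F ≤ M.rk ((S ∪ T).map e ∪ F) := M.rk_mono Finset.subset_union_right
    rw [h1] at h7 ⊢
    rw [h2] at h6 ⊢
    omega
  rk_insert_le := fun S x => by
    try dsimp only
    set e := Function.Embedding.subtype (fun x : M.E => x ∉ F) with he
    have h1 : (insert x S).map e ∪ F = insert (e x) (S.map e ∪ F) := by
      rw [Finset.map_insert, Finset.insert_union]
    have h2 := M.rk_insert_le (S.map e ∪ F) (e x)
    have h3 : M.rk F ≤ M.rk (S.map e ∪ F) := M.rk_mono Finset.subset_union_right
    rw [h1]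
    omega

end FinMatroid

namespace FinMatroid

/-- `P` is a Kazhdan–Lusztig family: it assigns to each loopless matroid a polynomial
satisfying the three defining conditions of the Kazhdan–Lusztig polynomial.
Condition (2), `deg P_M < rk M / 2`, is expressed by the vanishing of all coefficients
in degrees `i` with `2 i ≥ rk M`; condition (3), the Laurent-polynomial identity
`t^(rk M) P_M(t⁻¹) = ∑_F χ_{M_F}(t) P_{M^F}(t)`, is expressed via evaluation at every
nonzero rational number. -/
def IsKLFamily (P : FinMatroid → Polynomial ℤ) : Prop :=
  (∀ M : FinMatroid, M.Loopless → M.rank = 0 → P M = 1) ∧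
  (∀ M : FinMatroid, M.Loopless → 0 < M.rank →
      ∀ i : ℕ, M.rank ≤ 2 * i → (P M).coeff i = 0) ∧
  (∀ M : FinMatroid, M.Loopless → ∀ q : ℚ, q ≠ 0 →
      q ^ M.rank * Polynomial.aeval q⁻¹ (P M) =
        ∑ F ∈ M.flats,
          Polynomial.aeval q ((M.localization F).charPoly) *
            Polynomial.aeval q (P (M.restrictionAt F)))

end FinMatroid

namespace FinMatroid

variable (M : FinMatroid)

lemma rk_le_rank (S : Finset M.E) : M.rk S ≤ M.rank :=
  M.rk_mono (Finset.subset_univ S)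

lemma rk_insert_ge (S : Finset M.E) (x : M.E) : M.rk S ≤ M.rk (insert x S) :=
  M.rk_mono (Finset.subset_insert x S)

lemma mem_flats {F : Finset M.E} : F ∈ M.flats ↔ M.IsFlat F := by
  simp [flats]

lemma univ_mem_flats : (Finset.univ : Finset M.E) ∈ M.flats := by
  rw [mem_flats]; intro x hx; exact absurd (Finset.mem_univ x) hx

lemma rk_univ_eq : M.rk Finset.univ = M.rank := rfl

lemma flat_insert_rk {F : Finset M.E} (hF : M.IsFlat F) {x : M.E} (hx : x ∉ F) :
    M.rk (insert x F) = M.rk F + 1 := by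
  have h1 := M.rk_insert_le F x
  have h2 := M.rk_insert_ge F x
  have h3 := hF x hx
  omega

lemma one_le_rk (hM : M.Loopless) {S : Finset M.E} (hS : S.Nonempty) : 1 ≤ M.rk S := by
  obtain ⟨x, hx⟩ := hS
  calc 1 = M.rk {x} := (hM x).symm
  _ ≤ M.rk S := M.rk_mono (Finset.singleton_subset_iff.mpr hx)

lemma empty_isFlat (hM : M.Loopless) : M.IsFlat (∅ : Finset M.E) := by
  intro x _
  have h1 : insert x (∅ : Finset M.E) = {x} := rfl
  rw [h1, hM x, M.rk_empty]
  omega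

lemma eq_empty_of_rk_zero (hM : M.Loopless) {F : Finset M.E} (h : M.rk F = 0) : F = ∅ := by
  by_contra h'
  have := M.one_le_rk hM (Finset.nonempty_iff_ne_empty.mpr h')
  omega

lemma flat_eq_univ {F : Finset M.E} (hF : M.IsFlat F) (h : M.rank ≤ M.rk F) :
    F = Finset.univ := by
  apply Finset.eq_univ_of_forall
  intro x
  by_contra hx
  have h1 := M.flat_insert_rk hF hx
  have h2 := M.rk_le_rank (insert x F)
  omega

/-- The closure of a set. -/
noncomputable def cl (S : Finset M.E) : Finset M.E :=
  Finset.univ.filter (fun y => M.rk (insert y S) = M.rk S)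

lemma mem_cl {S : Finset M.E} {y : M.E} : y ∈ M.cl S ↔ M.rk (insert y S) = M.rk S := by
  simp [cl]

lemma subset_cl (S : Finset M.E) : S ⊆ M.cl S := by
  intro y hy
  rw [mem_cl, Finset.insert_eq_self.mpr hy]

lemma rk_union_eq (S : Finset M.E) :
    ∀ T : Finset M.E, (∀ y ∈ T, M.rk (insert y S) = M.rk S) → M.rk (S ∪ T) = M.rk S := by
  intro T
  induction T using Finset.induction_on with
  | empty => intro _; rw [Finset.union_empty]
  | @insert y T hy ih =>
    intro h
    have hT : M.rk (S ∪ T) = M.rk S := ih fun z hz => h z (Finset.mem_insert_of_mem hz)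
    have hy' : M.rk (insert y S) = M.rk S := h y (Finset.mem_insert_self y T)
    have hsub := M.rk_submod (S ∪ T) (insert y S)
    have h1 : (S ∪ T) ∪ insert y S = insert y (S ∪ T) := by
      ext z
      simp only [Finset.mem_union, Finset.mem_insert]
      tauto
    have h2 : S ⊆ (S ∪ T) ∩ insert y S := by
      intro z hz
      simp only [Finset.mem_inter, Finset.mem_union, Finset.mem_insert]
      tauto
    have h3 := M.rk_mono h2
    have h4 : S ∪ insert y T = insert y (S ∪ T) := by
      ext z
      simp only [Finset.mem_union, Finset.mem_insert]
      tauto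
    have h5 : M.rk S ≤ M.rk (S ∪ insert y T) := M.rk_mono Finset.subset_union_left
    rw [h4] at h5 ⊢
    rw [h1] at hsub
    omega

lemma rk_cl (S : Finset M.E) : M.rk (M.cl S) = M.rk S := by
  have h1 : M.rk (S ∪ M.cl S) = M.rk S :=
    M.rk_union_eq S (M.cl S) (fun y hy => (M.mem_cl).mp hy)
  rwa [Finset.union_eq_right.mpr (M.subset_cl S)] at h1

lemma cl_isFlat (S : Finset M.E) : M.IsFlat (M.cl S) := by
  intro x hx hcontra
  apply hx
  rw [mem_cl]
  have h1 : M.rk (insert x S) ≤ M.rk (insert x (M.cl S)) :=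
    M.rk_mono (Finset.insert_subset_insert _ (M.subset_cl S))
  rw [hcontra, M.rk_cl] at h1
  have h2 := M.rk_insert_ge S x
  omega

lemma flat_ssubset_atom (hM : M.Loopless) {G p : Finset M.E} (hG : M.IsFlat G)
    (hp1 : M.rk p = 1) (h : G ⊂ p) : G = ∅ := by
  rcases Finset.eq_empty_or_nonempty G with h0 | h0
  · exact h0
  · exfalso
    obtain ⟨x, hx, hx'⟩ := Finset.exists_of_ssubset h
    have h1 : M.rk (insert x G) = M.rk G + 1 := M.flat_insert_rk hG hx'
    have h2 : M.rk (insert x G) ≤ M.rk p := M.rk_mono (Finset.insert_subset hx h.subset)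
    have h3 := M.one_le_rk hM h0
    omega

lemma atom_subset_atom (hM : M.Loopless) {p q : Finset M.E} (hq : M.IsFlat q)
    (hq1 : M.rk q = 1) (hp1 : M.rk p = 1) (h : q ⊆ p) : q = p := by
  by_contra hne
  have h1 : q ⊂ p := ssubset_of_subset_of_ne h hne
  have h2 := M.flat_ssubset_atom hM hq hp1 h1
  rw [h2, M.rk_empty] at hq1
  omega

lemma exists_unique_cover (hM : M.Loopless) {F p : Finset M.E} (hF : M.IsFlat F)
    (hpF : M.IsFlat p) (hp1 : M.rk p = 1) (hnsub : ¬ p ⊆ F) :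
    ∃! G, (G ∈ M.flats ∧ F ⊆ G ∧ M.rk G = M.rk F + 1) ∧ p ⊆ G := by
  obtain ⟨x, hxp, hxF⟩ := Finset.not_subset.mp hnsub
  have hGflat := M.cl_isFlat (insert x F)
  have hrkins : M.rk (insert x F) = M.rk F + 1 := M.flat_insert_rk hF hxF
  have hrkG : M.rk (M.cl (insert x F)) = M.rk F + 1 := by rw [M.rk_cl, hrkins]
  have hFG : F ⊆ M.cl (insert x F) := (Finset.subset_insert x F).trans (M.subset_cl _)
  have hxG : x ∈ M.cl (insert x F) := M.subset_cl _ (Finset.mem_insert_self x F)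
  have hpG : p ⊆ M.cl (insert x F) := by
    intro y hy
    rw [mem_cl]
    have hxy : M.rk {x, y} ≤ 1 := by
      have : ({x, y} : Finset M.E) ⊆ p := by
        intro z hz
        rcases Finset.mem_insert.mp hz with h | h
        · exact h ▸ hxp
        · exact (Finset.mem_singleton.mp h) ▸ hy
      have := M.rk_mono this
      omega
    have hsub := M.rk_submod (insert x F) {x, y}
    have he : insert x F ∪ {x, y} = insert y (insert x F) := by
      ext z
      simp only [Finset.mem_union, Finset.mem_insert, Finset.mem_singleton]
      tauto
    have he2 : ({x} : Finset M.E) ⊆ insert x F ∩ {x, y} := by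
      intro z hz
      rw [Finset.mem_singleton] at hz
      subst hz
      simp
    have h2 := M.rk_mono he2
    rw [hM x] at h2
    rw [he] at hsub
    have h3 := M.rk_insert_ge (insert x F) y
    omega
  have hkey : ∀ A B : Finset M.E, M.IsFlat A → M.IsFlat B → F ⊆ A → F ⊆ B →
      M.rk A = M.rk F + 1 → M.rk B = M.rk F + 1 → x ∈ A → x ∈ B → ¬ A ⊆ B → False := by
    intro A B hA hB hFA hFB hrA hrB hxA hxB hAB
    obtain ⟨z, hzA, hzB⟩ := Finset.not_subset.mp hAB
    have h1 : M.rk (insert z B) = M.rk F + 2 := by rw [M.flat_insert_rk hB hzB, hrB]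
    have h2 : M.rk (insert z B) ≤ M.rk (A ∪ B) := by
      apply M.rk_mono
      exact Finset.insert_subset (Finset.mem_union_left _ hzA) Finset.subset_union_right
    have hsub := M.rk_submod A B
    have hint : insert x F ⊆ A ∩ B :=
      Finset.insert_subset (Finset.mem_inter.mpr ⟨hxA, hxB⟩) (Finset.subset_inter hFA hFB)
    have h3 := M.rk_mono hint
    omega
  refine ⟨M.cl (insert x F), ⟨⟨M.mem_flats.mpr hGflat, hFG, hrkG⟩, hpG⟩, ?_⟩
  rintro H ⟨⟨hHmem, hFH, hrkH⟩, hpH⟩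
  have hHflat := M.mem_flats.mp hHmem
  have hxH : x ∈ H := hpH hxp
  by_contra hne
  by_cases hHG : H ⊆ M.cl (insert x F)
  · by_cases hGH : M.cl (insert x F) ⊆ H
    · exact hne (Finset.Subset.antisymm hHG hGH)
    · exact hkey _ H hGflat hHflat hFG hFH hrkG hrkH hxG hxH hGH
  · exact hkey H _ hHflat hGflat hFH hFG hrkH hrkG hxH hxG hHG

lemma two_le_covers {F : Finset M.E} (hF : M.IsFlat F) (h : M.rk F + 2 ≤ M.rank) :
    2 ≤ (M.flats.filter (fun G => F ⊆ G ∧ M.rk G = M.rk F + 1)).card := by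
  have hFne : F ≠ Finset.univ := by
    intro h'
    rw [h', rk_univ_eq] at h
    omega
  obtain ⟨x, hx⟩ : ∃ x, x ∉ F := by
    by_contra h'
    push_neg at h'
    exact hFne (Finset.eq_univ_iff_forall.mpr h')
  have hG1flat := M.cl_isFlat (insert x F)
  have hrkG1 : M.rk (M.cl (insert x F)) = M.rk F + 1 := by
    rw [M.rk_cl, M.flat_insert_rk hF hx]
  have hFG1 : F ⊆ M.cl (insert x F) := (Finset.subset_insert x F).trans (M.subset_cl _)
  have hG1ne : M.cl (insert x F) ≠ Finset.univ := by
    intro h'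
    rw [h', rk_univ_eq] at hrkG1
    omega
  obtain ⟨y, hy⟩ : ∃ y, y ∉ M.cl (insert x F) := by
    by_contra h'
    push_neg at h'
    exact hG1ne (Finset.eq_univ_iff_forall.mpr h')
  have hyF : y ∉ F := fun h' => hy (hFG1 h')
  have hG2flat := M.cl_isFlat (insert y F)
  have hrkG2 : M.rk (M.cl (insert y F)) = M.rk F + 1 := by
    rw [M.rk_cl, M.flat_insert_rk hF hyF]
  have hFG2 : F ⊆ M.cl (insert y F) := (Finset.subset_insert y F).trans (M.subset_cl _)
  have hyG2 : y ∈ M.cl (insert y F) := M.subset_cl _ (Finset.mem_insert_self y F)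
  have hne : M.cl (insert x F) ≠ M.cl (insert y F) := fun h' => hy (h' ▸ hyG2)
  have h1 : 1 < (M.flats.filter (fun G => F ⊆ G ∧ M.rk G = M.rk F + 1)).card :=
    Finset.one_lt_card.mpr
      ⟨M.cl (insert x F), Finset.mem_filter.mpr ⟨M.mem_flats.mpr hG1flat, hFG1, hrkG1⟩,
       M.cl (insert y F), Finset.mem_filter.mpr ⟨M.mem_flats.mpr hG2flat, hFG2, hrkG2⟩, hne⟩
  omega

end FinMatroid

namespace FinMatroid

variable (M : FinMatroid)

/-- Greene's theorem (Basterfield–Kelly): a loopless matroid of rank at least 2 has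
at least as many coatoms (rank `d-1` flats) as atoms (rank `1` flats). -/
theorem greene (hM : M.Loopless) (h2 : 2 ≤ M.rank) :
    (M.flats.filter fun F => M.rk F = 1).card ≤
      (M.flats.filter fun F => M.rk F = M.rank - 1).card := by
  classical
  set A := M.flats.filter (fun F => M.rk F = 1) with hA
  set B := M.flats.filter (fun F => M.rk F = M.rank - 1) with hB
  let φ : ({p // p ∈ A} → ℚ) →ₗ[ℚ] ({H // H ∈ B} → ℚ) :=
    { toFun := fun c H => ∑ p ∈ A.attach, if ¬ (p : Finset M.E) ⊆ (H : Finset M.E) then c p else 0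
      map_add' := by
        intro c c'
        funext H
        show _ = (_ : ℚ) + _
        rw [← Finset.sum_add_distrib]
        refine Finset.sum_congr rfl fun p _ => ?_
        by_cases h : ¬ (p : Finset M.E) ⊆ (H : Finset M.E) <;> simp [h]
      map_smul' := by
        intro a c
        funext H
        show _ = a * _
        rw [Finset.mul_sum]
        refine Finset.sum_congr rfl fun p _ => ?_
        by_cases h : ¬ (p : Finset M.E) ⊆ (H : Finset M.E) <;> simp [h] }
  have hinj : Function.Injective φ := by
    rw [injective_iff_map_eq_zero]
    intro c hc
    set cc : Finset M.E → ℚ := fun p => if h : p ∈ A then c ⟨p, h⟩ else 0 with hcc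
    set f : Finset M.E → ℚ := fun S => ∑ p ∈ A, if p ⊆ S then cc p else 0 with hf
    set s : ℚ := ∑ p ∈ A, cc p with hs
    have hsum_ne : ∀ S : Finset M.E,
        (∑ p ∈ A, if ¬ p ⊆ S then cc p else 0) = s - f S := by
      intro S
      rw [hs, hf]
      rw [← Finset.sum_sub_distrib]
      refine Finset.sum_congr rfl fun p _ => ?_
      by_cases h : p ⊆ S <;> simp [h]
    have hH : ∀ H ∈ B, f H = s := by
      intro H hHmem
      have h0 : (∑ p ∈ A.attach, if ¬ (p : Finset M.E) ⊆ H then c p else 0) = 0 :=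
        congrFun hc ⟨H, hHmem⟩
      have h1 : (∑ p ∈ A, if ¬ p ⊆ H then cc p else 0) = 0 := by
        rw [← Finset.sum_attach A (fun p => if ¬ p ⊆ H then cc p else 0)]
        have heq : ∀ p ∈ A.attach,
            (if ¬ (p : Finset M.E) ⊆ H then cc (p : Finset M.E) else 0) =
              (if ¬ (p : Finset M.E) ⊆ H then c p else 0) := by
          intro p _
          by_cases h : ¬ (p : Finset M.E) ⊆ H
          · rw [if_pos h, if_pos h, hcc]
            simp
          · rw [if_neg h, if_neg h]
        rw [Finset.sum_congr rfl heq, h0]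
      rw [hsum_ne] at h1
      linarith
    have key : ∀ n : ℕ, 1 ≤ n → ∀ F : Finset M.E, M.IsFlat F → M.rk F + n = M.rank →
        f F = s := by
      intro n
      induction n using Nat.strong_induction_on with
      | _ n ih =>
        intro hn F hF hrk
        rcases eq_or_lt_of_le hn with h1 | h1
        · apply hH F
          rw [hB, Finset.mem_filter]
          exact ⟨M.mem_flats.mpr hF, by omega⟩
        · set Cov := M.flats.filter (fun G => F ⊆ G ∧ M.rk G = M.rk F + 1) with hCov
          have hcard : 2 ≤ Cov.card := M.two_le_covers hF (by omega)
          have hGs : ∀ G ∈ Cov, f G = s := by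
            intro G hG
            obtain ⟨hGfl, hFG, hrkG⟩ := Finset.mem_filter.mp hG
            exact ih (n - 1) (by omega) (by omega) G (M.mem_flats.mp hGfl) (by omega)
          have hstep : ∀ G ∈ Cov, f G - f F = ∑ p ∈ A, (if p ⊆ G ∧ ¬ p ⊆ F then cc p else 0) := by
            intro G hG
            obtain ⟨hGfl, hFG, hrkG⟩ := Finset.mem_filter.mp hG
            rw [hf]
            rw [← Finset.sum_sub_distrib]
            refine Finset.sum_congr rfl fun p _ => ?_
            by_cases hpf : p ⊆ F
            · have hpg : p ⊆ G := hpf.trans hFG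
              simp [hpf, hpg]
            · by_cases hpg : p ⊆ G <;> simp [hpf, hpg]
          have hpart : ∑ G ∈ Cov, (f G - f F) = s - f F := by
            rw [Finset.sum_congr rfl hstep, Finset.sum_comm]
            have hinner : ∀ p ∈ A,
                (∑ G ∈ Cov, if p ⊆ G ∧ ¬ p ⊆ F then cc p else 0) =
                  (if ¬ p ⊆ F then cc p else 0) := by
              intro p hp
              by_cases hpF : p ⊆ F
              · rw [if_neg (by tauto)]
                refine Finset.sum_eq_zero fun G _ => ?_
                rw [if_neg (by tauto)]
              · rw [if_pos hpF]
                obtain ⟨hpfl, hp1⟩ := Finset.mem_filter.mp hp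
                obtain ⟨G0, ⟨⟨hG0mem, hG0sub, hG0rk⟩, hpG0⟩, huniq⟩ :=
                  M.exists_unique_cover hM hF (M.mem_flats.mp hpfl) hp1 hpF
                rw [Finset.sum_eq_single_of_mem G0
                    (Finset.mem_filter.mpr ⟨hG0mem, hG0sub, hG0rk⟩)]
                · rw [if_pos ⟨hpG0, hpF⟩]
                · intro b hb hbne
                  obtain ⟨hbfl, hbsub, hbrk⟩ := Finset.mem_filter.mp hb
                  rw [if_neg]
                  rintro ⟨hsub, -⟩
                  exact hbne (huniq b ⟨⟨hbfl, hbsub, hbrk⟩, hsub⟩)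
            rw [Finset.sum_congr rfl hinner, hsum_ne]
          rw [Finset.sum_congr rfl (fun G hG => by rw [hGs G hG]), Finset.sum_const,
            nsmul_eq_mul] at hpart
          have hq : (2 : ℚ) ≤ (Cov.card : ℚ) := by exact_mod_cast hcard
          nlinarith [hpart]
    have hs0 : s = 0 := by
      have hfe : f ∅ = s := by
        apply key M.rank (by omega) ∅ (M.empty_isFlat hM)
        rw [M.rk_empty]
        omega
      have hfe' : (∑ p ∈ A, if p ⊆ (∅ : Finset M.E) then cc p else 0) = s := hfe
      have : (∑ p ∈ A, if p ⊆ (∅ : Finset M.E) then cc p else 0) = 0 := by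
        refine Finset.sum_eq_zero fun p hp => ?_
        obtain ⟨hpfl, hp1⟩ := Finset.mem_filter.mp hp
        rw [if_neg]
        intro hsub
        have : p = ∅ := Finset.subset_empty.mp hsub
        rw [this, M.rk_empty] at hp1
        omega
      rw [this] at hfe'
      exact hfe'.symm
    have hatom : ∀ p0 ∈ A, cc p0 = 0 := by
      intro p0 hp0
      obtain ⟨hp0fl, hp01⟩ := Finset.mem_filter.mp hp0
      have hfp : f p0 = s := by
        apply key (M.rank - 1) (by omega) p0 (M.mem_flats.mp hp0fl)
        omega
      have hfp' : (∑ p ∈ A, if p ⊆ p0 then cc p else 0) = s := hfp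
      rw [Finset.sum_eq_single_of_mem p0 hp0] at hfp'
      · rw [if_pos (Finset.Subset.refl p0)] at hfp'
        rw [hfp', hs0]
      · intro b hb hbne
        obtain ⟨hbfl, hb1⟩ := Finset.mem_filter.mp hb
        rw [if_neg]
        intro hsub
        exact hbne (M.atom_subset_atom hM (M.mem_flats.mp hbfl) hb1 hp01 hsub)
    funext p
    have := hatom p.1 p.2
    rw [hcc] at this
    simp only [p.2, dif_pos] at this
    rw [Pi.zero_apply, ← this]
  have hfin := LinearMap.finrank_le_finrank_of_injective hinj
  rwa [Module.finrank_pi, Module.finrank_pi, Fintype.card_coe, Fintype.card_coe] at hfin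

end FinMatroid

namespace FinMatroid

variable (M : FinMatroid)

lemma mu_self (A : Finset M.E) : M.mu A A = 1 := by
  rw [mu]
  simp

lemma mu_atom (hM : M.Loopless) {p : Finset M.E} (hp : M.IsFlat p) (hp1 : M.rk p = 1) :
    M.mu ∅ p = -1 := by
  have hpne : p ≠ ∅ := by
    intro h
    rw [h, M.rk_empty] at hp1
    omega
  rw [mu, if_neg (Ne.symm hpne)]
  have hset : M.flats.filter (fun G => ∅ ⊆ G ∧ G ⊂ p) = {∅} := by
    ext G
    simp only [Finset.mem_filter, Finset.mem_singleton, Finset.empty_subset, true_and]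
    constructor
    · rintro ⟨hfl, hG⟩
      exact M.flat_ssubset_atom hM (M.mem_flats.mp hfl) hp1 hG
    · rintro rfl
      refine ⟨M.mem_flats.mpr (M.empty_isFlat hM), ?_⟩
      exact Finset.ssubset_iff_subset_ne.mpr ⟨Finset.empty_subset p, Ne.symm hpne⟩
  rw [hset]
  rw [Finset.sum_attach ({∅} : Finset (Finset M.E)) (fun G => M.mu ∅ G)]
  rw [Finset.sum_singleton, mu_self]

lemma charPoly_coeff (k : ℕ) :
    M.charPoly.coeff k =
      ∑ F ∈ M.flats.filter (fun F => M.rank - M.rk F = k), M.mu ∅ F := by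
  rw [charPoly, Polynomial.finset_sum_coeff, Finset.sum_filter]
  refine Finset.sum_congr rfl fun F _ => ?_
  rw [Polynomial.coeff_C_mul, Polynomial.coeff_X_pow]
  by_cases h : M.rank - M.rk F = k
  · rw [if_pos h, if_pos h.symm, mul_one]
  · rw [if_neg h, if_neg (fun hh => h hh.symm), mul_zero]

lemma charPoly_coeff_rank (hM : M.Loopless) : M.charPoly.coeff M.rank = 1 := by
  rw [charPoly_coeff]
  have hset : M.flats.filter (fun F => M.rank - M.rk F = M.rank) = {∅} := by
    ext F
    simp only [Finset.mem_filter, Finset.mem_singleton]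
    constructor
    · rintro ⟨hfl, hk⟩
      have := M.rk_le_rank F
      have hF0 : M.rk F = 0 := by
        by_cases h0 : M.rank = 0
        · omega
        · omega
      exact M.eq_empty_of_rk_zero hM hF0
    · rintro rfl
      refine ⟨M.mem_flats.mpr (M.empty_isFlat hM), ?_⟩
      rw [M.rk_empty]
      omega
  rw [hset, Finset.sum_singleton, mu_self]

lemma charPoly_coeff_pred (hM : M.Loopless) (h1 : 1 ≤ M.rank) :
    M.charPoly.coeff (M.rank - 1) =
      -(((M.flats.filter (fun F => M.rk F = 1)).card : ℤ)) := by
  rw [charPoly_coeff]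
  have hset : M.flats.filter (fun F => M.rank - M.rk F = M.rank - 1) =
      M.flats.filter (fun F => M.rk F = 1) := by
    ext F
    simp only [Finset.mem_filter, and_congr_right_iff]
    intro hfl
    have := M.rk_le_rank F
    omega
  rw [hset]
  have hconst : ∀ F ∈ M.flats.filter (fun F => M.rk F = 1), M.mu ∅ F = -1 := by
    intro F hF
    obtain ⟨hfl, h1'⟩ := Finset.mem_filter.mp hF
    exact M.mu_atom hM (M.mem_flats.mp hfl) h1'
  rw [Finset.sum_congr rfl hconst, Finset.sum_const, nsmul_eq_mul, mul_neg_one]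

lemma charPoly_coeff_zero {k : ℕ} (h : M.rank < k) : M.charPoly.coeff k = 0 := by
  rw [charPoly_coeff]
  rw [Finset.filter_false_of_mem, Finset.sum_empty]
  intro F _
  have := M.rk_le_rank F
  omega

lemma map_univ_mem (F : Finset M.E) :
    (Finset.univ : Finset {x // x ∈ F}).map (Function.Embedding.subtype _) = F := by
  ext x
  simp only [Finset.mem_map, Function.Embedding.coe_subtype]
  constructor
  · rintro ⟨a, -, rfl⟩
    exact a.2
  · intro hx
    exact ⟨⟨x, hx⟩, Finset.mem_univ _, rfl⟩

lemma map_univ_not_mem (F : Finset M.E) :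
    (Finset.univ : Finset {x // x ∉ F}).map (Function.Embedding.subtype _) = Fᶜ := by
  ext x
  simp only [Finset.mem_map, Function.Embedding.coe_subtype, Finset.mem_compl]
  constructor
  · rintro ⟨a, -, rfl⟩
    exact a.2
  · intro hx
    exact ⟨⟨x, hx⟩, Finset.mem_univ _, rfl⟩

lemma localization_rk (F : Finset M.E) (S : Finset {x // x ∈ F}) :
    (M.localization F).rk S = M.rk (S.map (Function.Embedding.subtype _)) := rfl

lemma localization_rank (F : Finset M.E) : (M.localization F).rank = M.rk F := by
  have h : (M.localization F).rank =
      M.rk ((Finset.univ : Finset {x // x ∈ F}).map (Function.Embedding.subtype _)) := rfl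
  rw [h, map_univ_mem]

lemma restrictionAt_rk (F : Finset M.E) (S : Finset {x // x ∉ F}) :
    (M.restrictionAt F).rk S =
      M.rk (S.map (Function.Embedding.subtype _) ∪ F) - M.rk F := rfl

lemma restrictionAt_rank (F : Finset M.E) :
    (M.restrictionAt F).rank = M.rank - M.rk F := by
  have h : (M.restrictionAt F).rank =
      M.rk ((Finset.univ : Finset {x // x ∉ F}).map (Function.Embedding.subtype _) ∪ F)
        - M.rk F := rfl
  rw [h, map_univ_not_mem]
  have hcu : Fᶜ ∪ F = (Finset.univ : Finset M.E) := by
    ext x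
    simp only [Finset.mem_union, Finset.mem_compl, Finset.mem_univ, iff_true]
    tauto
  rw [hcu]
  rfl

lemma localization_loopless (hM : M.Loopless) (F : Finset M.E) :
    (M.localization F).Loopless := by
  intro x
  have h : ({x} : Finset {y // y ∈ F}).map (Function.Embedding.subtype _) = {x.1} :=
    Finset.map_singleton _ _
  erw [localization_rk, h, hM]

lemma restrictionAt_loopless {F : Finset M.E} (hF : M.IsFlat F) :
    (M.restrictionAt F).Loopless := by
  intro x
  have h : ({x} : Finset {y // y ∉ F}).map (Function.Embedding.subtype _) = {x.1} :=
    Finset.map_singleton _ _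
  erw [restrictionAt_rk, h, ← Finset.insert_eq, M.flat_insert_rk hF x.2]
  omega

lemma localization_univ_atoms_card :
    ((M.localization Finset.univ).flats.filter
        (fun G => (M.localization Finset.univ).rk G = 1)).card
      = (M.flats.filter (fun F => M.rk F = 1)).card := by
  apply Finset.card_bij (fun G _ => G.map (Function.Embedding.subtype _))
  · intro G hG
    obtain ⟨hGfl, hG1⟩ := Finset.mem_filter.mp hG
    have hGflat := (M.localization Finset.univ).mem_flats.mp hGfl
    rw [Finset.mem_filter]
    refine ⟨M.mem_flats.mpr ?_, ?_⟩
    · intro x hx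
      have hx' : (⟨x, Finset.mem_univ x⟩ : {y // y ∈ (Finset.univ : Finset M.E)}) ∉ G := by
        intro hmem
        exact hx (Finset.mem_map_of_mem _ hmem)
      have hne := hGflat ⟨x, Finset.mem_univ x⟩ hx'
      erw [localization_rk, localization_rk, Finset.map_insert] at hne
      exact hne
    · erw [localization_rk] at hG1
      exact hG1
  · intro a ha b hb h
    exact Finset.map_injective _ h
  · intro F hF
    obtain ⟨hFfl, hF1⟩ := Finset.mem_filter.mp hF
    have hmapeq : (F.subtype (fun x => x ∈ (Finset.univ : Finset M.E))).map
        (Function.Embedding.subtype _) = F := by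
      rw [Finset.subtype_map, Finset.filter_true_of_mem (fun x _ => Finset.mem_univ x)]
    refine ⟨F.subtype (fun x => x ∈ (Finset.univ : Finset M.E)), ?_, hmapeq⟩
    refine Finset.mem_filter.mpr ?_
    constructor
    · refine (M.localization Finset.univ).mem_flats.mpr ?_
      intro x hx
      have hx1 : x.1 ∉ F := fun h => hx (Finset.mem_subtype.mpr h)
      have hne := M.mem_flats.mp hFfl x.1 hx1
      erw [localization_rk, localization_rk, Finset.map_insert, hmapeq]
      erw [localization_rk, hmapeq]
      exact hne
    · erw [localization_rk, hmapeq]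
      exact hF1

end FinMatroid

namespace FinMatroid

lemma natDegree_P_le (P : FinMatroid → Polynomial ℤ) (hP : IsKLFamily P)
    (N : FinMatroid) (hN : N.Loopless) : (P N).natDegree ≤ N.rank := by
  rcases Nat.eq_zero_or_pos N.rank with h | h
  · rw [hP.1 N hN h]
    simp
  · refine Polynomial.natDegree_le_iff_coeff_eq_zero.mpr fun m hm => ?_
    exact hP.2.1 N hN h m (by omega)

lemma master (P : FinMatroid → Polynomial ℤ) (hP : IsKLFamily P)
    (N : FinMatroid) (hN : N.Loopless) :
    (∑ i ∈ Finset.range (N.rank + 1),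
        Polynomial.C (((P N).coeff i : ℚ)) * Polynomial.X ^ (N.rank - i)) =
      ∑ F ∈ N.flats,
        ((N.localization F).charPoly.map (algebraMap ℤ ℚ)) *
          ((P (N.restrictionAt F)).map (algebraMap ℤ ℚ)) := by
  apply Polynomial.eq_of_infinite_eval_eq
  refine Set.Infinite.mono ?_ ((Set.finite_singleton (0 : ℚ)).infinite_compl)
  intro q hq
  have hq0 : q ≠ 0 := by simpa [Set.mem_compl_iff] using hq
  simp only [Set.mem_setOf_eq]
  rw [Polynomial.eval_finset_sum, Polynomial.eval_finset_sum]
  have hRHS : ∀ F ∈ N.flats,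
      Polynomial.eval q (((N.localization F).charPoly.map (algebraMap ℤ ℚ)) *
          ((P (N.restrictionAt F)).map (algebraMap ℤ ℚ)))
        = Polynomial.aeval q ((N.localization F).charPoly) *
            Polynomial.aeval q (P (N.restrictionAt F)) := by
    intro F _
    rw [Polynomial.eval_mul, Polynomial.eval_map, Polynomial.eval_map,
      Polynomial.aeval_def, Polynomial.aeval_def]
  rw [Finset.sum_congr rfl hRHS]
  rw [← hP.2.2 N hN q hq0]
  have hdeg : ((P N).map (algebraMap ℤ ℚ)).natDegree < N.rank + 1 :=
    lt_of_le_of_lt (le_trans Polynomial.natDegree_map_le (natDegree_P_le P hP N hN))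
      (Nat.lt_succ_self _)
  have haev : Polynomial.aeval q⁻¹ (P N) =
      ∑ i ∈ Finset.range (N.rank + 1), ((P N).coeff i : ℚ) * q⁻¹ ^ i := by
    rw [Polynomial.aeval_def, ← Polynomial.eval_map, Polynomial.eval_eq_sum_range' hdeg]
    refine Finset.sum_congr rfl fun i _ => ?_
    rw [Polynomial.coeff_map]
    simp
  rw [haev, Finset.mul_sum]
  refine Finset.sum_congr rfl fun i hi => ?_
  rw [Polynomial.eval_mul, Polynomial.eval_C, Polynomial.eval_pow, Polynomial.eval_X]
  have hi' : i ≤ N.rank := by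
    have := Finset.mem_range.mp hi
    omega
  rw [pow_sub₀ q hq0 hi', inv_pow]
  ring

lemma lhs_coeff (d : ℕ) (a : ℕ → ℚ) (j : ℕ) (hj : j ≤ d) :
    (∑ i ∈ Finset.range (d + 1), Polynomial.C (a i) * Polynomial.X ^ (d - i)).coeff (d - j)
      = a j := by
  rw [Polynomial.finset_sum_coeff]
  rw [Finset.sum_eq_single_of_mem j (Finset.mem_range.mpr (by omega))]
  · rw [Polynomial.coeff_C_mul, Polynomial.coeff_X_pow, if_pos rfl, mul_one]
  · intro i hi hne
    rw [Polynomial.coeff_C_mul, Polynomial.coeff_X_pow, if_neg, mul_zero]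
    have hi' := Finset.mem_range.mp hi
    omega

lemma coeff_zero_eq_one (P : FinMatroid → Polynomial ℤ) (hP : IsKLFamily P)
    (N : FinMatroid) (hN : N.Loopless) : (P N).coeff 0 = 1 := by
  rcases Nat.eq_zero_or_pos N.rank with h0 | hpos
  · rw [hP.1 N hN h0]
    simp
  · have hm := master P hP N hN
    have hL := congrArg (fun p => Polynomial.coeff p N.rank) hm
    have hlhs := lhs_coeff N.rank (fun i => ((P N).coeff i : ℚ)) 0 (Nat.zero_le _)
    rw [Nat.sub_zero] at hlhs
    rw [hlhs, Polynomial.finset_sum_coeff] at hL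
    have hterm : ∀ F ∈ N.flats,
        ((((N.localization F).charPoly.map (algebraMap ℤ ℚ)) *
          ((P (N.restrictionAt F)).map (algebraMap ℤ ℚ))).coeff N.rank)
        = (if F = Finset.univ then 1 else 0) := by
      intro F hFfl
      have hFflat := N.mem_flats.mp hFfl
      by_cases hF : F = Finset.univ
      · rw [if_pos hF]
        subst hF
        have hres0 : (N.restrictionAt Finset.univ).rank = 0 := by
          rw [restrictionAt_rank, rk_univ_eq]
          omega
        have h1 : P (N.restrictionAt Finset.univ) = 1 :=
          hP.1 _ (N.restrictionAt_loopless hFflat) hres0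
        rw [h1, Polynomial.map_one, mul_one, Polynomial.coeff_map]
        have h2 : (N.localization Finset.univ).charPoly.coeff N.rank = 1 := by
          have h3 := (N.localization Finset.univ).charPoly_coeff_rank
            (N.localization_loopless hN Finset.univ)
          rwa [localization_rank, rk_univ_eq] at h3
        rw [h2]
        simp
      · rw [if_neg hF]
        have hrkF : N.rk F < N.rank := by
          rcases lt_or_eq_of_le (N.rk_le_rank F) with h | h
          · exact h
          · exact absurd (N.flat_eq_univ hFflat (le_of_eq h.symm)) hF
        rw [Polynomial.coeff_mul]
        refine Finset.sum_eq_zero fun jk hjk => ?_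
        have hsum : jk.1 + jk.2 = N.rank := by
          rwa [Finset.HasAntidiagonal.mem_antidiagonal] at hjk
        by_cases hj : N.rk F < jk.1
        · have hz : ((N.localization F).charPoly).coeff jk.1 = 0 := by
            apply charPoly_coeff_zero
            rwa [localization_rank]
          rw [Polynomial.coeff_map, hz]
          simp
        · have hres : 0 < (N.restrictionAt F).rank := by
            rw [restrictionAt_rank]
            omega
          have hz : (P (N.restrictionAt F)).coeff jk.2 = 0 := by
            apply hP.2.1 _ (N.restrictionAt_loopless hFflat) hres
            rw [restrictionAt_rank]
            omega
          rw [Polynomial.coeff_map (f := algebraMap ℤ ℚ) (p := P (N.restrictionAt F)), hz]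
          simp
    rw [Finset.sum_congr rfl hterm, Finset.sum_ite_eq' N.flats Finset.univ (fun _ => (1 : ℚ)),
      if_pos N.univ_mem_flats] at hL
    exact_mod_cast hL

end FinMatroid

/-- The linear coefficient of the Kazhdan–Lusztig polynomial of any
loopless matroid is non-negative. -/
theorem kl_linear_coeff_nonneg (P : FinMatroid → Polynomial ℤ)
    (hP : FinMatroid.IsKLFamily P) (M : FinMatroid) (hM : M.Loopless) :
    0 ≤ (P M).coeff 1 := by
  classical
  rcases Nat.eq_zero_or_pos M.rank with h0 | hpos
  · rw [hP.1 M hM h0, Polynomial.coeff_one]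
    norm_num
  by_cases hd2 : M.rank ≤ 2
  · rw [hP.2.1 M hM hpos 1 (by omega)]
  push_neg at hd2
  set W1 : ℕ := (M.flats.filter (fun F => M.rk F = 1)).card with hW1
  have hm := FinMatroid.master P hP M hM
  have hL : (∑ i ∈ Finset.range (M.rank + 1),
        Polynomial.C (((P M).coeff i : ℚ)) * Polynomial.X ^ (M.rank - i)).coeff (M.rank - 1)
      = ∑ F ∈ M.flats,
        ((((M.localization F).charPoly.map (algebraMap ℤ ℚ)) *
          ((P (M.restrictionAt F)).map (algebraMap ℤ ℚ))).coeff (M.rank - 1)) :=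
    congrArg (fun p => Polynomial.coeff p (M.rank - 1)) hm |>.trans
      (Polynomial.finset_sum_coeff _ _ _)
  have hlhs : (∑ i ∈ Finset.range (M.rank + 1),
        Polynomial.C (((P M).coeff i : ℚ)) * Polynomial.X ^ (M.rank - i)).coeff (M.rank - 1)
      = ((P M).coeff 1 : ℚ) :=
    FinMatroid.lhs_coeff M.rank (fun i => ((P M).coeff i : ℚ)) 1 (by omega)
  rw [hlhs] at hL
  have hterm : ∀ F ∈ M.flats,
      ((((M.localization F).charPoly.map (algebraMap ℤ ℚ)) *
        ((P (M.restrictionAt F)).map (algebraMap ℤ ℚ))).coeff (M.rank - 1))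
      = (if M.rk F = M.rank then -(W1 : ℚ) else if M.rk F = M.rank - 1 then 1 else 0) := by
    intro F hFfl
    have hFflat := M.mem_flats.mp hFfl
    have hFle := M.rk_le_rank F
    by_cases hcase1 : M.rk F = M.rank
    · rw [if_pos hcase1]
      have hFu : F = Finset.univ := M.flat_eq_univ hFflat (le_of_eq hcase1.symm)
      subst hFu
      have hres0 : (M.restrictionAt Finset.univ).rank = 0 := by
        rw [FinMatroid.restrictionAt_rank, FinMatroid.rk_univ_eq]
        omega
      have h1 : P (M.restrictionAt Finset.univ) = 1 :=
        hP.1 _ (M.restrictionAt_loopless hFflat) hres0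
      rw [h1, Polynomial.map_one, mul_one, Polynomial.coeff_map]
      have h2 : (M.localization Finset.univ).charPoly.coeff (M.rank - 1) = -(W1 : ℤ) := by
        have h3 := (M.localization Finset.univ).charPoly_coeff_pred
          (M.localization_loopless hM Finset.univ)
          (by rw [FinMatroid.localization_rank, FinMatroid.rk_univ_eq]; omega)
        rw [FinMatroid.localization_rank, FinMatroid.rk_univ_eq] at h3
        rw [h3, FinMatroid.localization_univ_atoms_card, hW1]
      rw [h2]
      simp
    · rw [if_neg hcase1]
      by_cases hcase2 : M.rk F = M.rank - 1
      · rw [if_pos hcase2]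
        rw [Polynomial.coeff_mul]
        rw [Finset.sum_eq_single_of_mem (M.rank - 1, 0)
            (Finset.HasAntidiagonal.mem_antidiagonal.mpr (by omega))]
        · have h1 : (M.localization F).charPoly.coeff (M.rank - 1) = 1 := by
            have h3 := (M.localization F).charPoly_coeff_rank (M.localization_loopless hM F)
            rwa [FinMatroid.localization_rank, hcase2] at h3
          have h2 : (P (M.restrictionAt F)).coeff 0 = 1 :=
            FinMatroid.coeff_zero_eq_one P hP _ (M.restrictionAt_loopless hFflat)
          rw [Polynomial.coeff_map, Polynomial.coeff_map, h1, h2]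
          simp
        · intro jk hjk hne
          have hsum : jk.1 + jk.2 = M.rank - 1 := Finset.HasAntidiagonal.mem_antidiagonal.mp hjk
          have hk : 0 < jk.2 := by
            rcases Nat.eq_zero_or_pos jk.2 with h | h
            · exfalso
              apply hne
              rw [Prod.ext_iff]
              exact ⟨by omega, h⟩
            · exact h
          have hres : 0 < (M.restrictionAt F).rank := by
            rw [FinMatroid.restrictionAt_rank]
            omega
          have hz : (P (M.restrictionAt F)).coeff jk.2 = 0 := by
            apply hP.2.1 _ (M.restrictionAt_loopless hFflat) hres
            rw [FinMatroid.restrictionAt_rank]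
            omega
          rw [Polynomial.coeff_map (p := P (M.restrictionAt F)), hz]
          simp
      · rw [if_neg hcase2]
        have hrk2 : M.rk F + 2 ≤ M.rank := by omega
        rw [Polynomial.coeff_mul]
        refine Finset.sum_eq_zero fun jk hjk => ?_
        have hsum : jk.1 + jk.2 = M.rank - 1 := Finset.HasAntidiagonal.mem_antidiagonal.mp hjk
        by_cases hj : M.rk F < jk.1
        · have hz : ((M.localization F).charPoly).coeff jk.1 = 0 := by
            apply FinMatroid.charPoly_coeff_zero
            rwa [FinMatroid.localization_rank]
          rw [Polynomial.coeff_map, hz]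
          simp
        · have hres : 0 < (M.restrictionAt F).rank := by
            rw [FinMatroid.restrictionAt_rank]
            omega
          have hz : (P (M.restrictionAt F)).coeff jk.2 = 0 := by
            apply hP.2.1 _ (M.restrictionAt_loopless hFflat) hres
            rw [FinMatroid.restrictionAt_rank]
            omega
          rw [Polynomial.coeff_map (p := P (M.restrictionAt F)), hz]
          simp
  rw [Finset.sum_congr rfl hterm] at hL
  have huniv : M.flats.filter (fun F => M.rk F = M.rank) = {Finset.univ} := by
    ext F
    simp only [Finset.mem_filter, Finset.mem_singleton]
    constructor
    · rintro ⟨hfl, hrk⟩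
      exact M.flat_eq_univ (M.mem_flats.mp hfl) (le_of_eq hrk.symm)
    · rintro rfl
      exact ⟨M.univ_mem_flats, rfl⟩
  rw [Finset.sum_ite, huniv, Finset.sum_singleton, Finset.sum_boole] at hL
  have hff : ((M.flats.filter (fun F => ¬ M.rk F = M.rank)).filter
      (fun F => M.rk F = M.rank - 1)) = M.flats.filter (fun F => M.rk F = M.rank - 1) := by
    rw [Finset.filter_filter]
    apply Finset.filter_congr
    intro F hF
    constructor
    · rintro ⟨-, h⟩
      exact h
    · intro h
      exact ⟨by omega, h⟩
  rw [hff] at hL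
  have hgreene : W1 ≤ (M.flats.filter (fun F => M.rk F = M.rank - 1)).card :=
    M.greene hM (by omega)
  have hL' : ((P M).coeff 1 : ℚ) =
      -(W1 : ℚ) + ((M.flats.filter (fun F => M.rk F = M.rank - 1)).card : ℚ) := hL
  have hfin : (0 : ℚ) ≤ ((P M).coeff 1 : ℚ) := by
    rw [hL']
    have h1 : (W1 : ℚ) ≤ ((M.flats.filter (fun F => M.rk F = M.rank - 1)).card : ℚ) := by
      exact_mod_cast hgreene
    linarith
  exact_mod_cast hfin
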